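/- (Recursion (IW) for the W-sum.) Suppose f : α → α → R is antisymmetric, i.e. f(u,v) = −f(v,u) for all u, v ∈ α, and k ≥ 2. Then W_f((a_1,b_1), (a_2,b_2), …, (a_k,b_k)) = Σ_{l=2}^k [ W_f((a_l,b_1), (a_2,b_2), …, (a_{l−1},b_{l−1}), (a_{l+1},b_{l+1}), …, (a_k,b_k)) · f(b_l, a_1) − W_f((b_l,b_1), (a_2,b_2), …, (a_{l−1},b_{l−1}), (a_{l+1},b_{l+1}), …, (a_k,b_k)) · f(a_l, a_1) ], where the W_f's on the right-hand side are taken over the indicated (k−1)-tuples of pairs. -/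

import Mathlib

/-!
Write `W_f(p)` as a sum, over sign vectors `ε` and cyclic orders `σ` with `σ 0 = 0`, of the cyclic
product of the weights `ε_u f(B_u(ε_u), A_v(ε_v))` along `σ`. Reversing the cycle and flipping every
sign preserves each term, by antisymmetry, so `W_f(p)` is twice the sum over the `ε` with `ε_1 = 1`.
In that half-sum, cut the cycle at its last vertex `l` with sign `e`: the closing edge contributes
`e · f(B_l(e), a_1)`, and the remaining path, closed up through the merged pair `(A_l(e), b_1)`,
is a term of the half-sum of the `k - 1` pairs obtained by merging pair `l` into the first one.
-/

/-- The sign of a Boolean: `true ↦ 1`, `false ↦ -1` (encoding `ε ∈ {1, -1}`). -/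
def signR (R : Type*) [CommRing R] (e : Bool) : R := if e then 1 else -1

/-- `B_i(ε)`: the second component `b_i` if `ε = 1`, the first component `a_i` if `ε = -1`. -/
def Bc {α : Type*} (q : α × α) (e : Bool) : α := if e then q.2 else q.1

/-- `A_i(ε)`: the first component `a_i` if `ε = 1`, the second component `b_i` if `ε = -1`. -/
def Ac {α : Type*} (q : α × α) (e : Bool) : α := if e then q.1 else q.2

/-- `W_h((a_1,b_1), …, (a_k,b_k)) = Σ_{ε ∈ {1,−1}^k} Σ_{σ ∈ S'_k} ∏_{i=1}^k
ε_{σ(i)} · h(B_{σ(i)}(ε_{σ(i)}), A_{σ(i+1)}(ε_{σ(i+1)}))`, where `S'_k` is the set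
of permutations fixing the first index, and indices are cyclic (`σ(k+1) := σ(1)`). -/
def Wsum {R α : Type*} [CommRing R] (h : α → α → R) {k : ℕ} (p : Fin k → α × α) : R :=
  ∑ ε : Fin k → Bool,
    ∑ σ ∈ Finset.univ.filter (fun σ : Equiv.Perm (Fin k) => ∀ i : Fin k, (i : ℕ) = 0 → σ i = i),
      ∏ i : Fin k,
        signR R (ε (σ i)) * h (Bc (p (σ i)) (ε (σ i)))
          (Ac (p (σ (finRotate k i))) (ε (σ (finRotate k i))))

open Finset Equiv

lemma Fin.succAbove_eq_zero_iff' {n : ℕ} {l : Fin (n + 2)} {j : Fin (n + 1)} :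
    l.succAbove j = 0 ↔ l ≠ 0 ∧ j = 0 := by
  rcases eq_or_ne l 0 with rfl | hl
  · simp [Fin.succ_ne_zero]
  · simp [Fin.succAbove_eq_zero_iff hl, hl]

lemma Fin.insertNth_apply_zero_of_ne_zero {β : Type*} {n : ℕ} {l : Fin (n + 2)} (hl : l ≠ 0)
    (x : β) (ε : Fin (n + 1) → β) : Fin.insertNth (α := fun _ => β) l x ε 0 = ε 0 := by
  rw [← Fin.succAbove_ne_zero_zero hl, Fin.insertNth_apply_succAbove]

def permSnocEquiv (n : ℕ) : Fin (n + 1) × Perm (Fin n) ≃ Perm (Fin (n + 1)) where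
  toFun x := (finSuccEquiv' (Fin.last n)).trans (x.2.optionCongr.trans (finSuccEquiv' x.1).symm)
  invFun σ := (σ (Fin.last n), removeNone
    (((finSuccEquiv' (Fin.last n)).symm.trans σ).trans (finSuccEquiv' (σ (Fin.last n)))))
  left_inv := by
    rintro ⟨l, τ⟩
    simp [trans_assoc, ← trans_assoc _ _ τ.optionCongr]
  right_inv σ := by
    ext i
    rcases Fin.eq_castSucc_or_eq_last i with ⟨j, rfl⟩ | rfl <;> simp

@[simp]
lemma permSnocEquiv_apply_castSucc {n : ℕ} (l : Fin (n + 1)) (τ : Perm (Fin n)) (j : Fin n) :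
    permSnocEquiv n (l, τ) j.castSucc = l.succAbove (τ j) := by
  simp [permSnocEquiv, finSuccEquiv'_last_apply_castSucc]

@[simp]
lemma permSnocEquiv_apply_last {n : ℕ} (l : Fin (n + 1)) (τ : Perm (Fin n)) :
    permSnocEquiv n (l, τ) (Fin.last n) = l := by
  simp [permSnocEquiv]

def permsFixingZero (n : ℕ) : Finset (Perm (Fin (n + 1))) := univ.filter fun σ => σ 0 = 0

@[simp]
lemma mem_permsFixingZero {n : ℕ} {σ : Perm (Fin (n + 1))} : σ ∈ permsFixingZero n ↔ σ 0 = 0 :=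
  mem_filter_univ _

lemma sum_permsFixingZero_succ {M : Type*} [AddCommMonoid M] {n : ℕ}
    (F : Perm (Fin (n + 2)) → M) :
    ∑ σ ∈ permsFixingZero (n + 1), F σ =
      ∑ l ∈ univ.filter (· ≠ 0), ∑ τ ∈ permsFixingZero n, F (permSnocEquiv _ (l, τ)) := by
  rw [← sum_product']
  refine (sum_equiv (permSnocEquiv _) (fun ⟨l, τ⟩ => ?_) (fun _ _ => rfl)).symm
  have h0 : permSnocEquiv _ (l, τ) 0 = l.succAbove (τ 0) := permSnocEquiv_apply_castSucc l τ 0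
  simp [h0, Fin.succAbove_eq_zero_iff']

lemma sum_filter_zero_eq_true_eq_sum_insertNth {M : Type*} [AddCommMonoid M] {n : ℕ}
    {l : Fin (n + 2)} (hl : l ≠ 0) (F : (Fin (n + 2) → Bool) → M) :
    ∑ ε ∈ univ.filter (fun ε => ε 0 = true), F ε =
      ∑ e : Bool, ∑ ε ∈ univ.filter (fun ε : Fin (n + 1) → Bool => ε 0 = true),
        F (Fin.insertNth l e ε) := by
  rw [← sum_product']
  refine (sum_equiv (Fin.insertNthEquiv (fun _ => Bool) l) (fun _ => ?_) (fun _ _ => rfl)).symm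
  simp [Fin.insertNth_apply_zero_of_ne_zero hl]

section CyclicProduct
variable {M ι : Type*} [CommMonoid M]

def cycProd (g : ι → ι → M) {k : ℕ} (s : Fin k → ι) : M := ∏ i, g (s i) (s (finRotate k i))

lemma cycProd_eq_prod_mul {k : ℕ} (g : ι → ι → M) (s : Fin (k + 1) → ι) :
    cycProd g s = (∏ i : Fin k, g (s i.castSucc) (s i.succ)) * g (s (Fin.last k)) (s 0) := by
  rw [cycProd, Fin.prod_univ_castSucc, finRotate_last]
  congr 2 with i
  congr
  ext; simp

lemma cycProd_comp_neg {k : ℕ} (g : ι → ι → M) (s : Fin (k + 1) → ι) :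
    cycProd g (s ∘ Neg.neg) = cycProd (fun u v => g v u) s := by
  unfold cycProd
  rw [← ((finRotate _).trans (Equiv.neg _)).prod_comp]
  refine prod_congr rfl fun i _ => ?_
  simp

lemma cycProd_mul_left {k : ℕ} (a : ι → M) (g : ι → ι → M) (s : Fin k → ι) :
    cycProd (fun u v => a u * g u v) s = cycProd (fun u v => a v * g u v) s := by
  simp only [cycProd, prod_mul_distrib]
  rw [Equiv.prod_comp (finRotate k) (fun i => a (s i))]

end CyclicProduct

section Wsum
variable {R α ι : Type*} [CommRing R]

lemma Bc_not (q : α × α) (e : Bool) : Bc q (!e) = Ac q e := by cases e <;> rfl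

lemma Ac_not (q : α × α) (e : Bool) : Ac q (!e) = Bc q e := by cases e <;> rfl

lemma signR_not (e : Bool) : signR R (!e) = -signR R e := by cases e <;> simp [signR]

def wsumWeight (f : α → α → R) (p : ι → α × α) (ε : ι → Bool) (u v : ι) : R :=
  signR R (ε u) * f (Bc (p u) (ε u)) (Ac (p v) (ε v))

lemma Wsum_eq_sum_cycProd (f : α → α → R) {m : ℕ} (p : Fin (m + 1) → α × α) :
    Wsum f p = ∑ ε, ∑ σ ∈ permsFixingZero m, cycProd (wsumWeight f p ε) σ := by
  refine sum_congr rfl fun ε _ => sum_congr (filter_congr fun σ _ => ?_) fun _ _ => rfl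
  exact ⟨fun h => h 0 rfl, fun h i hi => Fin.val_eq_zero_iff.1 hi ▸ h⟩

lemma cycProd_wsumWeight_not_comp_neg {f : α → α → R} (hanti : ∀ u v, f u v = -f v u)
    (p : ι → α × α) (ε : ι → Bool) {m : ℕ} (s : Fin (m + 1) → ι) :
    cycProd (wsumWeight f p fun i => !ε i) (s ∘ Neg.neg) = cycProd (wsumWeight f p ε) s := by
  have : (fun u v => wsumWeight f p (fun i => !ε i) v u) =
      fun u v => signR R (ε v) * f (Bc (p u) (ε u)) (Ac (p v) (ε v)) := by
    ext u v
    simp only [wsumWeight, signR_not, Bc_not, Ac_not]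
    rw [hanti (Ac (p v) (ε v))]
    ring
  rw [cycProd_comp_neg, this, ← cycProd_mul_left]
  rfl

lemma sum_cycProd_wsumWeight_not {f : α → α → R} (hanti : ∀ u v, f u v = -f v u) {m : ℕ}
    (p : Fin (m + 1) → α × α) (ε : Fin (m + 1) → Bool) :
    ∑ σ ∈ permsFixingZero m, cycProd (wsumWeight f p fun i => !ε i) σ =
      ∑ σ ∈ permsFixingZero m, cycProd (wsumWeight f p ε) σ := by
  refine (sum_equiv (Equiv.mulRight (Equiv.neg _)) (fun σ => by simp) fun σ _ => ?_).symm
  exact (cycProd_wsumWeight_not_comp_neg hanti p ε σ).symm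

def halfWsum (f : α → α → R) {m : ℕ} (p : Fin (m + 1) → α × α) : R :=
  ∑ ε ∈ univ.filter (fun ε : Fin (m + 1) → Bool => ε 0 = true),
    ∑ σ ∈ permsFixingZero m, cycProd (wsumWeight f p ε) σ

lemma Wsum_eq_two_mul_halfWsum {f : α → α → R} (hanti : ∀ u v, f u v = -f v u) {m : ℕ}
    (p : Fin (m + 1) → α × α) : Wsum f p = 2 * halfWsum f p := by
  rw [Wsum_eq_sum_cycProd, ← sum_filter_add_sum_filter_not univ (fun ε => ε 0 = true), two_mul,
    halfWsum]
  congr 1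
  refine sum_nbij' (fun ε i => !ε i) (fun ε i => !ε i) (by simp) (by simp) (by simp) (by simp)
    fun ε _ => (sum_cycProd_wsumWeight_not hanti p ε).symm

def mergedPairs {n : ℕ} (p : Fin (n + 2) → α × α) (l : Fin (n + 2)) (e : Bool) :
    Fin (n + 1) → α × α :=
  Function.update (p ∘ l.succAbove) 0 (Ac (p l) e, (p 0).2)

lemma wsumWeight_mergedPairs (f : α → α → R) {n : ℕ} (p : Fin (n + 2) → α × α) {l : Fin (n + 2)}
    (hl : l ≠ 0) (e : Bool) {ε : Fin (n + 1) → Bool} (hε : ε 0 = true) (u v : Fin (n + 1)) :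
    wsumWeight f (mergedPairs p l e) ε u v =
      wsumWeight f p (Fin.insertNth l e ε) (l.succAbove u)
        (if v = 0 then l else l.succAbove v) := by
  have hB : Bc (mergedPairs p l e u) (ε u) = Bc (p (l.succAbove u)) (ε u) := by
    rcases eq_or_ne u 0 with rfl | hu
    · simp [mergedPairs, hε, Bc, hl]
    · simp [mergedPairs, hu]
  have hA : Ac (mergedPairs p l e v) (ε v) =
      Ac (p (if v = 0 then l else l.succAbove v))
        (Fin.insertNth (α := fun _ => Bool) l e ε (if v = 0 then l else l.succAbove v)) := by
    split_ifs with hv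
    · simp [mergedPairs, hv, hε, Ac]
    · simp [mergedPairs, hv]
  simp [wsumWeight, hA, hB]

lemma cycProd_wsumWeight_permSnocEquiv (f : α → α → R) {n : ℕ} (p : Fin (n + 2) → α × α)
    {l : Fin (n + 2)} (hl : l ≠ 0) (e : Bool) {ε : Fin (n + 1) → Bool} (hε : ε 0 = true)
    {τ : Perm (Fin (n + 1))} (hτ : τ 0 = 0) :
    cycProd (wsumWeight f p (Fin.insertNth l e ε)) (permSnocEquiv _ (l, τ)) =
      cycProd (wsumWeight f (mergedPairs p l e) ε) τ * (signR R e * f (Bc (p l) e) (p 0).1) := by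
  have hσ0 : permSnocEquiv _ (l, τ) 0 = 0 := by
    simpa [hτ, hl] using permSnocEquiv_apply_castSucc l τ 0
  have hτsucc (i : Fin n) : τ i.succ ≠ 0 :=
    fun h => Fin.succ_ne_zero i (τ.injective (h.trans hτ.symm))
  rw [cycProd_eq_prod_mul, cycProd_eq_prod_mul, Fin.prod_univ_castSucc, hσ0]
  simp only [Fin.succ_castSucc, Fin.succ_last, permSnocEquiv_apply_castSucc,
    permSnocEquiv_apply_last, wsumWeight_mergedPairs f p hl e hε, hτ, hτsucc, if_true, if_false]
  congr 1
  simp [wsumWeight, Ac, Fin.insertNth_apply_zero_of_ne_zero hl, hε]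

lemma halfWsum_succ (f : α → α → R) {n : ℕ} (p : Fin (n + 2) → α × α) :
    halfWsum f p = ∑ l ∈ univ.filter (· ≠ 0), ∑ e : Bool,
      halfWsum f (mergedPairs p l e) * (signR R e * f (Bc (p l) e) (p 0).1) := by
  rw [halfWsum, sum_comm, sum_permsFixingZero_succ]
  refine sum_congr rfl fun l hlmem => ?_
  have hl : l ≠ 0 := (mem_filter_univ l).1 hlmem
  simp only [halfWsum, sum_mul]
  calc _ = ∑ τ ∈ permsFixingZero n, ∑ e : Bool, ∑ ε ∈ univ.filter (fun ε => ε 0 = true),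
          cycProd (wsumWeight f (mergedPairs p l e) ε) τ *
            (signR R e * f (Bc (p l) e) (p 0).1) := by
        refine sum_congr rfl fun τ hτ => ?_
        rw [sum_filter_zero_eq_true_eq_sum_insertNth hl]
        refine sum_congr rfl fun e _ => sum_congr rfl fun ε hε => ?_
        exact cycProd_wsumWeight_permSnocEquiv f p hl e ((mem_filter_univ ε).1 hε)
          (mem_permsFixingZero.1 hτ)
    _ = _ := by
        rw [sum_comm]
        exact sum_congr rfl fun e _ => sum_comm

end Wsum

/-- Recursion (IW) for the `W`-sum: if `f` is antisymmetric and `k ≥ 2`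
(here `k = n + 2`), then
`W_f((a_1,b_1),…,(a_k,b_k)) = Σ_{l=2}^k [ W_f((a_l,b_1), P_l) · f(b_l,a_1)
  − W_f((b_l,b_1), P_l) · f(a_l,a_1) ]`,
where `P_l` is the tuple `(a_2,b_2), …, (a_k,b_k)` with the `l`-th pair removed
(realized via `Fin.succAbove l` and updating the first entry). -/
theorem Wsum_recursion {R α : Type*} [CommRing R] {n : ℕ}
    (p : Fin (n + 2) → α × α) (f : α → α → R)
    (hanti : ∀ u v : α, f u v = - f v u) :
    Wsum f p =
      ∑ l ∈ Finset.univ.filter (fun l : Fin (n + 2) => l ≠ 0),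
        (Wsum f (Function.update (p ∘ l.succAbove) 0 ((p l).1, (p 0).2)) * f (p l).2 (p 0).1
          - Wsum f (Function.update (p ∘ l.succAbove) 0 ((p l).2, (p 0).2)) * f (p l).1 (p 0).1)
    := by
  rw [Wsum_eq_two_mul_halfWsum hanti, halfWsum_succ, mul_sum]
  refine sum_congr rfl fun l _ => ?_
  simp only [Fintype.sum_bool, mergedPairs, signR, Bc, Ac, if_true, Bool.false_eq_true, if_false,
    Wsum_eq_two_mul_halfWsum hanti]
  ring
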